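/- arXiv:2301.02045 — 2 statements merged into one kernel-verified Lean document; each statement's English description precedes it below -/
import Mathlib

section
/- Let A and B be elements of SL(2,ℝ). If the images of A and B in PSL(2,ℝ), the quotient of SL(2,ℝ) by its center {I, −I}, commute with each other, then A·B = B·A already holds in SL(2,ℝ). -/
open Matrix

lemma anticommute_contradiction (a b c d p q r s : ℝ)
    (hA : a*d - b*c = 1) (hB : p*s - q*r = 1)
    (f1 : a*p + b*r + (p*a + q*c) = 0)
    (f2 : a*q + b*s + (p*b + q*d) = 0)
    (f3 : c*p + d*r + (r*a + s*c) = 0)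
    (f4 : c*q + d*s + (r*b + s*d) = 0) : False := by
  have g11 : (p+s)*(a*p+b*r) = 0 := by linear_combination ((p+s)*f1 + r*f2 - q*f3)/2
  have g12 : (p+s)*(a*q+b*s) = 0 := by linear_combination s*f2 + (q*f1 - q*f4)/2
  have g21 : (p+s)*(c*p+d*r) = 0 := by linear_combination p*f3 + (r*f4 - r*f1)/2
  have g22 : (p+s)*(c*q+d*s) = 0 := by linear_combination ((p+s)*f4 + q*f3 - r*f2)/2
  have hu2 : (p+s)^2 = 0 := by
    linear_combination (-(p+s)^2*(p*s-q*r))*hA - (p+s)^2*hB +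
      ((p+s)*(c*q+d*s))*g11 - ((p+s)*(a*q+b*s))*g21
  have hu : p + s = 0 := by nlinarith [hu2, sq_nonneg (p+s)]
  have g11' : (a+d)*(p*a+q*c) = 0 := by linear_combination ((a+d)*f1 + c*f2 - b*f3)/2
  have g21' : (a+d)*(r*a+s*c) = 0 := by linear_combination a*f3 + (c*f4 - c*f1)/2
  have ht2 : (a+d)^2 = 0 := by
    linear_combination (-(a+d)^2*(a*d-b*c))*hB - (a+d)^2*hA +
      ((a+d)*(r*b+s*d))*g11' - ((a+d)*(p*b+q*d))*g21'
  have ht : a + d = 0 := by nlinarith [ht2, sq_nonneg (a+d)]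
  have hd : d = -a := by linarith
  have hs : s = -p := by linarith
  subst hd hs
  have e : (b*r - q*c)^2 = -4 - 4*a^2 - 4*p^2 := by
    linear_combination (b*r+q*c-2*a*p)*f1 + 4*(b*c)*hB - 4*(1+p^2)*hA
  nlinarith [e, sq_nonneg (b*r - q*c), sq_nonneg a, sq_nonneg p]

/-- If the images in PSL(2, ℝ) (the quotient of SL(2, ℝ) by its center `{I, -I}`)
of two elements `A`, `B` of SL(2, ℝ) commute, then `A` and `B` already
commute in SL(2, ℝ). -/
theorem commute_in_SL2R_of_commute_in_PSL2R
    (A B : Matrix.SpecialLinearGroup (Fin 2) ℝ)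
    (h : (QuotientGroup.mk' (Subgroup.center (Matrix.SpecialLinearGroup (Fin 2) ℝ)) A) *
          (QuotientGroup.mk' (Subgroup.center (Matrix.SpecialLinearGroup (Fin 2) ℝ)) B) =
        (QuotientGroup.mk' (Subgroup.center (Matrix.SpecialLinearGroup (Fin 2) ℝ)) B) *
          (QuotientGroup.mk' (Subgroup.center (Matrix.SpecialLinearGroup (Fin 2) ℝ)) A)) :
    A * B = B * A := by
  rw [← _root_.map_mul, ← _root_.map_mul, QuotientGroup.mk'_eq_mk'] at h
  obtain ⟨z, hz, hzeq⟩ := h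
  obtain ⟨r, hr2, hrz⟩ := Matrix.SpecialLinearGroup.mem_center_iff.mp hz
  have hr2' : r ^ 2 = 1 := by simpa using hr2
  have hr : r = 1 ∨ r = -1 := by
    have h0 : (r - 1) * (r + 1) = 0 := by linear_combination hr2'
    rcases mul_eq_zero.mp h0 with h'|h'
    · left; linarith
    · right; linarith
  have hmat : (A.1 * B.1) * z = B.1 * A.1 := by
    have := congrArg (Subtype.val) hzeq
    simpa using this
  rcases hr with h1|h1
  · subst h1
    have hz1 : (z : Matrix (Fin 2) (Fin 2) ℝ) = 1 := by
      rw [← hrz]; simp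
    apply Subtype.ext
    have : (A.1 * B.1) = B.1 * A.1 := by rw [← hmat, hz1, mul_one]
    simpa using this
  · exfalso
    subst h1
    have hz1 : (z : Matrix (Fin 2) (Fin 2) ℝ) = -1 := by
      rw [← hrz]
      ext i j
      simp [Matrix.scalar_apply, Matrix.diagonal, Matrix.one_apply]
      split <;> simp
    have hmat' : A.1 * B.1 + B.1 * A.1 = 0 := by
      rw [← hmat, hz1]; simp
    have hA : A.1 0 0 * A.1 1 1 - A.1 0 1 * A.1 1 0 = 1 := by
      have := A.2; rwa [Matrix.det_fin_two] at this
    have hB : B.1 0 0 * B.1 1 1 - B.1 0 1 * B.1 1 0 = 1 := by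
      have := B.2; rwa [Matrix.det_fin_two] at this
    have f := fun i j => congrFun (congrFun hmat' i) j
    have f00 := f 0 0; have f01 := f 0 1; have f10 := f 1 0; have f11 := f 1 1
    simp [Matrix.add_apply, Matrix.mul_apply, Fin.sum_univ_two] at f00 f01 f10 f11
    exact anticommute_contradiction (A.1 0 0) (A.1 0 1) (A.1 1 0) (A.1 1 1)
      (B.1 0 0) (B.1 0 1) (B.1 1 0) (B.1 1 1) hA hB
      (by linear_combination f00) (by linear_combination f01)
      (by linear_combination f10) (by linear_combination f11)
end

section
/- Let g be a nontrivial element of PSL(2,ℝ), the quotient of SL(2,ℝ) by its center {I, −I}. Then the centralizer C(g) = { h ∈ PSL(2,ℝ) | g·h = h·g } is a commutative subgroup of PSL(2,ℝ). -/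
lemma anticomm_false (p q r s a b c d : ℝ)
    (hdG : p*s - q*r = 1) (hdA : a*d - b*c = 1)
    (e00 : p*a + q*c = -(a*p + b*r)) (e01 : p*b + q*d = -(a*q + b*s))
    (e10 : r*a + s*c = -(c*p + d*r)) (e11 : r*b + s*d = -(c*q + d*s)) : False := by
  have hps : p + s = 0 := by
    linear_combination (d*e00 - c*e01 - b*e10 + a*e11)/2 - (p+s)*hdA
  have had : a + d = 0 := by
    linear_combination (s*e00 - r*e01 - q*e10 + p*e11)/2 - (a+d)*hdG
  have h1 : b*c = -(1 + a^2) := by linear_combination -hdA + a*had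
  have h2 : q*r = -(1 + p^2) := by linear_combination -hdG + p*hps
  have h3 : b*r + q*c = -(2*(a*p)) := by linear_combination e00
  have h4 : (b*r - q*c)^2 = -(4*(1 + a^2 + p^2)) := by
    linear_combination (b*r + q*c - 2*(a*p))*h3 - 4*q*r*h1 + 4*(1+a^2)*h2
  nlinarith [sq_nonneg (b*r - q*c), sq_nonneg a, sq_nonneg p, h4]

lemma comm_of_comm (p q r s a b c d w x y z : ℝ)
    (hns : q ≠ 0 ∨ r ≠ 0 ∨ p ≠ s)
    (eA00 : p*a + q*c = a*p + b*r) (eA01 : p*b + q*d = a*q + b*s)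
    (eA10 : r*a + s*c = c*p + d*r) (eA11 : r*b + s*d = c*q + d*s)
    (eB00 : p*w + q*y = w*p + x*r) (eB01 : p*x + q*z = w*q + x*s)
    (eB10 : r*w + s*y = y*p + z*r) (eB11 : r*x + s*z = y*q + z*s) :
    (a*w + b*y = w*a + x*c) ∧ (a*x + b*z = w*b + x*d) ∧
    (c*w + d*y = y*a + z*c) ∧ (c*x + d*z = y*b + z*d) := by
  rcases hns with hq | hr | hp
  · -- q ≠ 0
    have h1 : q*c = b*r := by linear_combination eA00
    have h2 : q*y = x*r := by linear_combination eB00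
    have h3 : q*(a-d) = b*(p-s) := by linear_combination -eA01
    have h4 : q*(w-z) = x*(p-s) := by linear_combination -eB01
    have hby : b*y = x*c := mul_left_cancel₀ hq (by linear_combination b*h2 - x*h1)
    have hcx : c*x = y*b := mul_left_cancel₀ hq (by linear_combination x*h1 - b*h2)
    have h5 : x*(a-d) = b*(w-z) := mul_left_cancel₀ hq (by linear_combination x*h3 - b*h4)
    have h6 : c*(w-z) = y*(a-d) := mul_left_cancel₀ hq
      (by linear_combination c*h4 - y*h3 + (p-s)*hcx)
    exact ⟨by linear_combination hby, by linear_combination h5,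
      by linear_combination h6, by linear_combination hcx⟩
  · -- r ≠ 0
    have h1 : r*b = q*c := by linear_combination -eA00
    have h2 : r*x = q*y := by linear_combination -eB00
    have h3 : r*(a-d) = c*(p-s) := by linear_combination eA10
    have h4 : r*(w-z) = y*(p-s) := by linear_combination eB10
    have hby : b*y = x*c := mul_left_cancel₀ hr (by linear_combination y*h1 - c*h2)
    have hcx : c*x = y*b := mul_left_cancel₀ hr (by linear_combination c*h2 - y*h1)
    have h6 : c*(w-z) = y*(a-d) := mul_left_cancel₀ hr (by linear_combination c*h4 - y*h3)
    have h5 : x*(a-d) = b*(w-z) := mul_left_cancel₀ hr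
      (by linear_combination (a-d)*h2 - (w-z)*h1 - q*h6)
    exact ⟨by linear_combination hby, by linear_combination h5,
      by linear_combination h6, by linear_combination hcx⟩
  · -- p ≠ s
    have hps : p - s ≠ 0 := sub_ne_zero_of_ne hp
    have h1 : (p-s)*b = q*(a-d) := by linear_combination eA01
    have h2 : (p-s)*c = r*(a-d) := by linear_combination -eA10
    have h3 : (p-s)*x = q*(w-z) := by linear_combination eB01
    have h4 : (p-s)*y = r*(w-z) := by linear_combination -eB10
    have hby : b*y = x*c := mul_left_cancel₀ hps (mul_left_cancel₀ hps
      (by linear_combination ((p-s)*y)*h1 + (q*(a-d))*h4 - ((p-s)*c)*h3 - (q*(w-z))*h2))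
    have hcx : c*x = y*b := mul_left_cancel₀ hps (mul_left_cancel₀ hps
      (by linear_combination ((p-s)*x)*h2 + (r*(a-d))*h3 - ((p-s)*b)*h4 - (r*(w-z))*h1))
    have h5 : x*(a-d) = b*(w-z) := mul_left_cancel₀ hps
      (by linear_combination (a-d)*h3 - (w-z)*h1)
    have h6 : c*(w-z) = y*(a-d) := mul_left_cancel₀ hps
      (by linear_combination (w-z)*h2 - (a-d)*h4)
    exact ⟨by linear_combination hby, by linear_combination h5,
      by linear_combination h6, by linear_combination hcx⟩

/-- The centralizer of a nontrivial element of PSL(2, ℝ)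
(the quotient of SL(2, ℝ) by its center `{I, -I}`) is commutative. -/
theorem centralizer_in_PSL2R_commutative
    (g : Matrix.SpecialLinearGroup (Fin 2) ℝ ⧸
          Subgroup.center (Matrix.SpecialLinearGroup (Fin 2) ℝ))
    (hg : g ≠ 1)
    (a b : Matrix.SpecialLinearGroup (Fin 2) ℝ ⧸
          Subgroup.center (Matrix.SpecialLinearGroup (Fin 2) ℝ))
    (ha : g * a = a * g) (hb : g * b = b * g) :
    a * b = b * a := by
  obtain ⟨G, rfl⟩ := QuotientGroup.mk_surjective g
  obtain ⟨A, rfl⟩ := QuotientGroup.mk_surjective a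
  obtain ⟨B, rfl⟩ := QuotientGroup.mk_surjective b
  have key : ∀ X : Matrix.SpecialLinearGroup (Fin 2) ℝ,
      (QuotientGroup.mk G * QuotientGroup.mk X : _ ⧸ Subgroup.center _) =
        QuotientGroup.mk X * QuotientGroup.mk G →
      (G : Matrix (Fin 2) (Fin 2) ℝ) * (X : Matrix (Fin 2) (Fin 2) ℝ) =
        (X : Matrix (Fin 2) (Fin 2) ℝ) * (G : Matrix (Fin 2) (Fin 2) ℝ) := by
    intro X hX
    have h1 : (QuotientGroup.mk (G * X) :
        _ ⧸ Subgroup.center (Matrix.SpecialLinearGroup (Fin 2) ℝ)) =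
        QuotientGroup.mk (X * G) := by
      simpa [QuotientGroup.mk_mul] using hX
    have h2 : (G*X)⁻¹ * (X*G) ∈ Subgroup.center (Matrix.SpecialLinearGroup (Fin 2) ℝ) :=
      QuotientGroup.eq.mp h1
    obtain ⟨t, ht, hsc⟩ := Matrix.SpecialLinearGroup.mem_center_iff.mp h2
    have hgrp : (G*X) * ((G*X)⁻¹ * (X*G)) = X*G := by group
    have h3 : (X : Matrix (Fin 2) (Fin 2) ℝ) * (G : Matrix (Fin 2) (Fin 2) ℝ) =
        ((G : Matrix (Fin 2) (Fin 2) ℝ) * (X : Matrix (Fin 2) (Fin 2) ℝ)) *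
          Matrix.scalar (Fin 2) t := by
      rw [hsc, ← Matrix.SpecialLinearGroup.coe_mul G X, ← Matrix.SpecialLinearGroup.coe_mul X G]
      conv_lhs => rw [← hgrp]
      rw [Matrix.SpecialLinearGroup.coe_mul]
    have ht2 : t = 1 ∨ t = -1 := by
      have ht' : t^2 = 1 := by simpa using ht
      have h4 : (t-1)*(t+1) = 0 := by linear_combination ht'
      rcases mul_eq_zero.mp h4 with h | h
      · exact Or.inl (by linarith)
      · exact Or.inr (by linarith)
    rcases ht2 with rfl | rfl
    · simp only [map_one, mul_one] at h3
      exact h3.symm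
    · have h3' : (X : Matrix (Fin 2) (Fin 2) ℝ) * (G : Matrix (Fin 2) (Fin 2) ℝ) =
          -((G : Matrix (Fin 2) (Fin 2) ℝ) * (X : Matrix (Fin 2) (Fin 2) ℝ)) := by
        rw [h3, map_neg, map_one, mul_neg, mul_one]
      exfalso
      have e := Matrix.ext_iff.mpr h3'
      have e00 := e 0 0; have e01 := e 0 1; have e10 := e 1 0; have e11 := e 1 1
      simp [Matrix.mul_apply, Fin.sum_univ_two] at e00 e01 e10 e11
      have hdX : (X : Matrix (Fin 2) (Fin 2) ℝ) 0 0 * (X : Matrix (Fin 2) (Fin 2) ℝ) 1 1 -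
          (X : Matrix (Fin 2) (Fin 2) ℝ) 0 1 * (X : Matrix (Fin 2) (Fin 2) ℝ) 1 0 = 1 := by
        have := X.property; rwa [Matrix.det_fin_two] at this
      have hdG : (G : Matrix (Fin 2) (Fin 2) ℝ) 0 0 * (G : Matrix (Fin 2) (Fin 2) ℝ) 1 1 -
          (G : Matrix (Fin 2) (Fin 2) ℝ) 0 1 * (G : Matrix (Fin 2) (Fin 2) ℝ) 1 0 = 1 := by
        have := G.property; rwa [Matrix.det_fin_two] at this
      exact anticomm_false _ _ _ _ _ _ _ _ hdX hdG
        (by linear_combination e00) (by linear_combination e01)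
        (by linear_combination e10) (by linear_combination e11)
  have hGA := key A ha
  have hGB := key B hb
  have hns : (G : Matrix (Fin 2) (Fin 2) ℝ) 0 1 ≠ 0 ∨
      (G : Matrix (Fin 2) (Fin 2) ℝ) 1 0 ≠ 0 ∨
      (G : Matrix (Fin 2) (Fin 2) ℝ) 0 0 ≠ (G : Matrix (Fin 2) (Fin 2) ℝ) 1 1 := by
    by_contra h
    push_neg at h
    obtain ⟨h01, h10, hd⟩ := h
    apply hg
    rw [QuotientGroup.eq_one_iff]
    refine Matrix.SpecialLinearGroup.mem_center_iff.mpr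
      ⟨(G : Matrix (Fin 2) (Fin 2) ℝ) 0 0, ?_, ?_⟩
    · have hdet := G.property
      rw [Matrix.det_fin_two] at hdet
      rw [Fintype.card_fin]
      rw [← hd, h01] at hdet
      linear_combination hdet
    · ext i j
      fin_cases i <;> fin_cases j <;>
        simp [Matrix.scalar_apply, Matrix.diagonal, h01, h10, hd]
  have eA := Matrix.ext_iff.mpr hGA
  have eB := Matrix.ext_iff.mpr hGB
  have eA00 := eA 0 0; have eA01 := eA 0 1; have eA10 := eA 1 0; have eA11 := eA 1 1
  have eB00 := eB 0 0; have eB01 := eB 0 1; have eB10 := eB 1 0; have eB11 := eB 1 1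
  simp [Matrix.mul_apply, Fin.sum_univ_two] at eA00 eA01 eA10 eA11 eB00 eB01 eB10 eB11
  obtain ⟨c1, c2, c3, c4⟩ := comm_of_comm
    ((G : Matrix (Fin 2) (Fin 2) ℝ) 0 0) ((G : Matrix (Fin 2) (Fin 2) ℝ) 0 1)
    ((G : Matrix (Fin 2) (Fin 2) ℝ) 1 0) ((G : Matrix (Fin 2) (Fin 2) ℝ) 1 1)
    ((A : Matrix (Fin 2) (Fin 2) ℝ) 0 0) ((A : Matrix (Fin 2) (Fin 2) ℝ) 0 1)
    ((A : Matrix (Fin 2) (Fin 2) ℝ) 1 0) ((A : Matrix (Fin 2) (Fin 2) ℝ) 1 1)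
    ((B : Matrix (Fin 2) (Fin 2) ℝ) 0 0) ((B : Matrix (Fin 2) (Fin 2) ℝ) 0 1)
    ((B : Matrix (Fin 2) (Fin 2) ℝ) 1 0) ((B : Matrix (Fin 2) (Fin 2) ℝ) 1 1) hns
    (by linear_combination eA00) (by linear_combination eA01)
    (by linear_combination eA10) (by linear_combination eA11)
    (by linear_combination eB00) (by linear_combination eB01)
    (by linear_combination eB10) (by linear_combination eB11)
  have hmat : (A : Matrix (Fin 2) (Fin 2) ℝ) * (B : Matrix (Fin 2) (Fin 2) ℝ) =
      (B : Matrix (Fin 2) (Fin 2) ℝ) * (A : Matrix (Fin 2) (Fin 2) ℝ) := by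
    ext i j
    fin_cases i <;> fin_cases j <;>
      simp only [Fin.zero_eta, Fin.mk_one, Fin.isValue, Matrix.mul_apply, Fin.sum_univ_two]
    · linear_combination c1
    · linear_combination c2
    · linear_combination c3
    · linear_combination c4
  have hSL : A * B = B * A := Subtype.ext (by
    rw [Matrix.SpecialLinearGroup.coe_mul, Matrix.SpecialLinearGroup.coe_mul]
    exact hmat)
  rw [← QuotientGroup.mk_mul, ← QuotientGroup.mk_mul, hSL]
end
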